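/- Let d≥2, γ>-1, μ>-1/2 and let 0≤m≤n be integers. Let P:ℝ^d→ℝ be a polynomial satisfying, for all v∈ℝ^d, ΔP(v) − (⟨v,∇⟩²P)(v) − (2μ+d-1)(⟨v,∇⟩P)(v) = −m(m+2μ+d-1)P(v), where ⟨v,∇⟩ = ∑_{i=1}^d v_i ∂_i and ⟨v,∇⟩² denotes the operator ⟨v,∇⟩ applied twice. Define u(x,t) = P_{n-m}^{(m+μ+(d-1)/2,γ)}(1-2t)·t^{m/2}·P(x/√t) for x∈ℝ^d and t∈(0,1). Then for all such (x,t): t(1-t)∂_t²u + (1-t)⟨x,∇_x⟩∂_t u + (1/4)(1-t)Δ_x u + (μ+(d+1)/2)(1-t)∂_t u − ((γ+1)/2)(2t∂_t u + ⟨x,∇_x⟩u) = −(n(n+μ+γ+(d+1)/2) − m(n+μ+(γ+d)/2))·u. -/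

import Mathlib

open MeasureTheory Real Filter Set
open scoped RealInnerProductSpace ENNReal

noncomputable section

/-- Pochhammer symbol `(a)_n = a(a+1)⋯(a+n-1)`. -/
def poch (a : ℝ) (n : ℕ) : ℝ := ∏ i ∈ Finset.range n, (a + i)

/-- Jacobi polynomial `P_n^{(a,b)}(t)` via its hypergeometric expansion. -/
def jacobiP (n : ℕ) (a b : ℝ) (t : ℝ) : ℝ :=
  (poch (a + 1) n / (n.factorial : ℝ)) *
    ∑ j ∈ Finset.range (n + 1),
      (poch (-(n : ℝ)) j * poch ((n : ℝ) + a + b + 1) j) /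
        (poch (a + 1) j * (j.factorial : ℝ)) * ((1 - t) / 2) ^ j

/-- Squared norm `h_n^{(a,b)}` of the Jacobi polynomials. -/
def hJ (n : ℕ) (a b : ℝ) : ℝ :=
  (poch (a + 1) n * poch (b + 1) n * (a + b + (n : ℝ) + 1)) /
    ((n.factorial : ℝ) * poch (a + b + 2) n * (a + b + 2 * (n : ℝ) + 1))

/-- Normalization constant `c_{a,b}` of the Jacobi weight. -/
def cJ (a b : ℝ) : ℝ := Real.Gamma (a + b + 2) / (Real.Gamma (a + 1) * Real.Gamma (b + 1))

/-- Generalized binomial coefficient `C(n+δ, n) = (δ+1)_n/n!`. -/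
def binomC (δ : ℝ) (n : ℕ) : ℝ := poch (δ + 1) n / (n.factorial : ℝ)

/-- The parabolic domain `𝕌 = {(x₁,x₂) : x₁² ≤ x₂ ≤ 1}`. -/
def Udom : Set (ℝ × ℝ) := {x | x.1 ^ 2 ≤ x.2 ∧ x.2 ≤ 1}

/-- The curved part `𝕌₀` of the boundary of `𝕌`. -/
def Udom0 : Set (ℝ × ℝ) := {x ∈ Udom | x.2 = x.1 ^ 2}

/-- The weight `U_{a,b}` on the parabolic domain. -/
def Uw (a b : ℝ) (x : ℝ × ℝ) : ℝ := (1 - x.2) ^ a * (x.2 - x.1 ^ 2) ^ (b - 1/2)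

/-- Normalization constant `d_{a,b}` of `U_{a,b}`. -/
def dU (a b : ℝ) : ℝ := (∫ x in Udom, Uw a b x)⁻¹

/-- The weighted measure `U_{a,b}(x) dx` on `𝕌`. -/
def μU (a b : ℝ) : Measure (ℝ × ℝ) :=
  (volume.restrict Udom).withDensity fun x => ENNReal.ofReal (Uw a b x)

/-- The orthogonal basis `P_{k,n}^{a,b}` on the parabolic domain (with the continuous
extension to `x₂ = 0`, where in Lean `x₁/√x₂ = 0` and `(√x₂)^k = 0` for `k ≥ 1`). -/
def PknU (a b : ℝ) (k n : ℕ) (x : ℝ × ℝ) : ℝ :=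
  jacobiP (n - k) (b + (k : ℝ)) a (1 - 2 * x.2) * (Real.sqrt x.2) ^ k *
    jacobiP k (b - 1/2) (b - 1/2) (x.1 / Real.sqrt x.2)

/-- Squared norms `h_{k,n}^{a,b}`. -/
def hknU (a b : ℝ) (k n : ℕ) : ℝ :=
  (cJ b a / cJ (b + (k : ℝ)) a) * hJ (n - k) (b + (k : ℝ)) a * hJ k (b - 1/2) (b - 1/2)

/-- Reproducing kernel `P_n(U_{a,b}; x, y)` on the parabolic domain. -/
def PnU (a b : ℝ) (n : ℕ) (x y : ℝ × ℝ) : ℝ :=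
  ∑ k ∈ Finset.range (n + 1), PknU a b k n x * PknU a b k n y / hknU a b k n

/-- Partial-sum kernel `K_n(U_{a,b}; x, y)`. -/
def KnU (a b : ℝ) (n : ℕ) (x y : ℝ × ℝ) : ℝ :=
  ∑ m ∈ Finset.range (n + 1), PnU a b m x y

/-- Cesàro `(C,δ)` kernel `K_n^δ(U_{a,b}; x, y)`. -/
def KnUCes (a b δ : ℝ) (n : ℕ) (x y : ℝ × ℝ) : ℝ :=
  (binomC δ n)⁻¹ * ∑ m ∈ Finset.range (n + 1), binomC (δ - 1) (n - m) * KnU a b m x y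

/-- Cesàro `(C,δ)` means `S_n^δ(U_{a,b}; f, x)`. -/
def SnUCes (a b δ : ℝ) (n : ℕ) (f : ℝ × ℝ → ℝ) (x : ℝ × ℝ) : ℝ :=
  dU a b * ∫ y in Udom, f y * KnUCes a b δ n x y * Uw a b y

/-- `Z_m^λ`, the normalized Gegenbauer polynomial (`2T_m` in the limiting case `λ = 0`). -/
def Zm (lam : ℝ) (m : ℕ) (t : ℝ) : ℝ :=
  if lam = 0 then (if m = 0 then 1 else 2 * (Polynomial.Chebyshev.T ℝ (m : ℤ)).eval t)
  else ((m : ℝ) + lam) / lam * (poch (2 * lam) m / poch (lam + 1/2) m) *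
    jacobiP m (lam - 1/2) (lam - 1/2) t

/-- Euclidean space `ℝ^d`. -/
abbrev Euc (d : ℕ) := EuclideanSpace ℝ (Fin d)

/-- The surface measure on the unit sphere `𝕊^{d-1}`. -/
def sphMeas (d : ℕ) : Measure (Metric.sphere (0 : Euc d) 1) :=
  (volume : Measure (Euc d)).toSphere

/-- The surface area `ω_d` of the unit sphere. -/
def ωd (d : ℕ) : ℝ := (sphMeas d Set.univ).toReal

/-- Integral over the unit sphere. -/
def sphInt (d : ℕ) (f : Euc d → ℝ) : ℝ := ∫ ξ, f (ξ : Euc d) ∂(sphMeas d)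

/-- Integral over the surface of the paraboloid `𝕍₀^{d+1}`:
`∫_{𝕍₀} f dσ = ∫_0^1 t^{(d-1)/2} ∫_{𝕊^{d-1}} f(√t ξ, t) dσ_𝕊(ξ) dt`. -/
def V0Int (d : ℕ) (f : Euc d → ℝ → ℝ) : ℝ :=
  ∫ t in (0:ℝ)..1, t ^ (((d : ℝ) - 1) / 2) * ∫ ξ, f (Real.sqrt t • (ξ : Euc d)) t ∂(sphMeas d)

/-- The weight `ϖ_{β,γ}(t) = t^β (1-t)^γ`. -/
def wt (β γ : ℝ) (t : ℝ) : ℝ := t ^ β * (1 - t) ^ γ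

/-- Normalization constant `b_{β,γ}` on the surface of the paraboloid. -/
def bV0 (d : ℕ) (β γ : ℝ) : ℝ := (V0Int d fun _ t => wt β γ t)⁻¹

/-- The surface of the paraboloid `𝕍₀^{d+1} = {(x,t) : ‖x‖² = t ≤ 1}`. -/
def V0set (d : ℕ) : Set (Euc d × ℝ) := {q | ‖q.1‖ ^ 2 = q.2 ∧ q.2 ≤ 1}

/-- The weighted measure `ϖ_{β,γ} dσ` on (the sphere-parametrization of) `𝕍₀^{d+1}`. -/
def μV0 (d : ℕ) (β γ : ℝ) : Measure (Metric.sphere (0 : Euc d) 1 × ℝ) :=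
  ((sphMeas d).prod (volume.restrict (Set.Icc (0:ℝ) 1))).withDensity
    fun p => ENNReal.ofReal (p.2 ^ (((d : ℝ) - 1) / 2) * wt β γ p.2)

/-- Squared norms `h_{m,n}^{β,γ}` on the surface of the paraboloid. -/
def hV0 (d : ℕ) (β γ : ℝ) (m n : ℕ) : ℝ :=
  (cJ (β + ((d : ℝ) - 1) / 2) γ / cJ ((m : ℝ) + β + ((d : ℝ) - 1) / 2) γ) *
    hJ (n - m) ((m : ℝ) + β + ((d : ℝ) - 1) / 2) γ

/-- The reproducing kernel `P_n(ϖ_{β,γ}; (√t ξ, t), (√s η, s))` on `𝕍₀^{d+1}`,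
written as a function of `t`, `s` and `c = ⟨ξ,η⟩`. -/
def PnV0 (d : ℕ) (β γ : ℝ) (n : ℕ) (t s c : ℝ) : ℝ :=
  ∑ m ∈ Finset.range (n + 1),
    jacobiP (n - m) ((m : ℝ) + β + ((d : ℝ) - 1) / 2) γ (1 - 2 * t) *
      jacobiP (n - m) ((m : ℝ) + β + ((d : ℝ) - 1) / 2) γ (1 - 2 * s) / hV0 d β γ m n *
      (Real.sqrt t) ^ m * (Real.sqrt s) ^ m * Zm (((d : ℝ) - 2) / 2) m c

/-- Partial-sum kernel `K_n(ϖ_{β,γ})` on `𝕍₀^{d+1}`. -/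
def KnV0 (d : ℕ) (β γ : ℝ) (n : ℕ) (t s c : ℝ) : ℝ :=
  ∑ m ∈ Finset.range (n + 1), PnV0 d β γ m t s c

/-- Cesàro `(C,δ)` kernel on `𝕍₀^{d+1}`. -/
def KnV0Ces (d : ℕ) (β γ δ : ℝ) (n : ℕ) (t s c : ℝ) : ℝ :=
  (binomC δ n)⁻¹ * ∑ m ∈ Finset.range (n + 1), binomC (δ - 1) (n - m) * KnV0 d β γ m t s c

/-- Cesàro `(C,δ)` means `S_n^δ(ϖ_{β,γ}; f, (√t ξ, t))` on `𝕍₀^{d+1}`. -/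
def SnV0Ces (d : ℕ) (β γ δ : ℝ) (n : ℕ) (f : Euc d × ℝ → ℝ) (ξ : Euc d) (t : ℝ) : ℝ :=
  bV0 d β γ * ∫ s in (0:ℝ)..1, s ^ (((d : ℝ) - 1) / 2) * wt β γ s *
    ∫ η, f (Real.sqrt s • (η : Euc d), s) * KnV0Ces d β γ δ n t s ⟪ξ, (η : Euc d)⟫ ∂(sphMeas d)

/-- Normalization constant `τ_β` in the definition of `T_{β,γ}`. -/
def τβ (d : ℕ) (β : ℝ) : ℝ :=
  (∫ z₁ in (-1:ℝ)..1, ∫ z₂ in (-1:ℝ)..1,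
    (1 - z₁) ^ (((d : ℝ) - 2) / 2) * (1 + z₁) ^ (β - 1/2) * (1 - z₂ ^ 2) ^ β)⁻¹

/-- The operator `T_{β,γ}` on the surface of the paraboloid, with
`(x,t) = (√t ξ, t)` and `(y,s) = (√s η, s)`. -/
def TV0 (d : ℕ) (β γ : ℝ) (g : ℝ × ℝ → ℝ × ℝ → ℝ) (ξ η : Euc d) (t s : ℝ) : ℝ :=
  if β = -(1/2) then g (Real.sqrt t, t) (⟪ξ, Real.sqrt s • η⟫, s)
  else τβ d β * ∫ z₁ in (-1:ℝ)..1, ∫ z₂ in (-1:ℝ)..1,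
    g (Real.sqrt t, t) (Real.sqrt s * ((1 - z₁) / 2 * ⟪ξ, η⟫ + (1 + z₁) / 2 * z₂), s) *
      ((1 - z₁) ^ (((d : ℝ) - 2) / 2) * (1 + z₁) ^ (β - 1/2) * (1 - z₂ ^ 2) ^ β)

/-- The pseudo convolution `f ∗_{𝕍₀} g` on the surface of the paraboloid. -/
def convV0 (d : ℕ) (β γ : ℝ) (f : Euc d × ℝ → ℝ) (g : ℝ × ℝ → ℝ × ℝ → ℝ)
    (η : Euc d) (s : ℝ) : ℝ :=
  bV0 d β γ * ∫ t in (0:ℝ)..1, t ^ (((d : ℝ) - 1) / 2) * wt β γ t *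
    ∫ ξ, f (Real.sqrt t • (ξ : Euc d), t) * TV0 d β γ g (ξ : Euc d) η t s ∂(sphMeas d)

/-- The solid paraboloid `𝕍^{d+1} = {(x,t) : ‖x‖² ≤ t ≤ 1}`. -/
def Vset (d : ℕ) : Set (Euc d × ℝ) := {q | ‖q.1‖ ^ 2 ≤ q.2 ∧ q.2 ≤ 1}

/-- The weight `W_{β,γ,μ}` on the solid paraboloid. -/
def WW (d : ℕ) (β γ μ : ℝ) (q : Euc d × ℝ) : ℝ :=
  q.2 ^ β * (1 - q.2) ^ γ * (q.2 - ‖q.1‖ ^ 2) ^ (μ - 1/2)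

/-- Normalization constant `b_{β,γ,μ}`. -/
def bW (d : ℕ) (β γ μ : ℝ) : ℝ := (∫ q in Vset d, WW d β γ μ q)⁻¹

/-- The weighted measure `W_{β,γ,μ}(x,t) dx dt` on `𝕍^{d+1}`. -/
def μW (d : ℕ) (β γ μ : ℝ) : Measure (Euc d × ℝ) :=
  (volume.restrict (Vset d)).withDensity fun q => ENNReal.ofReal (WW d β γ μ q)

/-- The weight `ϖ_μ(y) = (1-‖y‖²)^{μ-1/2}` on the unit ball. -/
def wB (d : ℕ) (μ : ℝ) (y : Euc d) : ℝ := (1 - ‖y‖ ^ 2) ^ (μ - 1/2)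

/-- Normalization constant `b_μ` of `ϖ_μ` on the unit ball. -/
def bB (d : ℕ) (μ : ℝ) : ℝ := (∫ y in Metric.closedBall (0 : Euc d) 1, wB d μ y)⁻¹

/-- Normalization constant `σ_μ = (∫_{-1}^1 (1-u²)^{μ-1} du)⁻¹`. -/
def σμ (μ : ℝ) : ℝ := (∫ u in (-1:ℝ)..1, (1 - u ^ 2) ^ (μ - 1))⁻¹

/-- `ξ₀(x,t,y,s;u) = (⟨x,y⟩ + u √(t-‖x‖²) √(s-‖y‖²))/√(st)`. -/
def xi0 (d : ℕ) (x : Euc d) (t : ℝ) (y : Euc d) (s : ℝ) (u : ℝ) : ℝ :=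
  (⟪x, y⟫ + u * Real.sqrt (t - ‖x‖ ^ 2) * Real.sqrt (s - ‖y‖ ^ 2)) / Real.sqrt (s * t)

/-- Squared norms `h_{m,n}^{β,γ,μ}` on the solid paraboloid. -/
def hW (d : ℕ) (β γ μ : ℝ) (m n : ℕ) : ℝ :=
  (cJ (β + μ + ((d : ℝ) - 1) / 2) γ / cJ ((m : ℝ) + β + μ + ((d : ℝ) - 1) / 2) γ) *
    hJ (n - m) ((m : ℝ) + β + μ + ((d : ℝ) - 1) / 2) γ

/-- The reproducing kernel `P_n(W_{β,γ,μ}; (x,t), (y,s))` on the solid paraboloid. -/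
def PnW (d : ℕ) (β γ μ : ℝ) (n : ℕ) (x : Euc d) (t : ℝ) (y : Euc d) (s : ℝ) : ℝ :=
  σμ μ * ∫ u in (-1:ℝ)..1,
    (∑ m ∈ Finset.range (n + 1),
      jacobiP (n - m) ((m : ℝ) + β + μ + ((d : ℝ) - 1) / 2) γ (1 - 2 * t) *
        jacobiP (n - m) ((m : ℝ) + β + μ + ((d : ℝ) - 1) / 2) γ (1 - 2 * s) / hW d β γ μ m n *
        (Real.sqrt t) ^ m * (Real.sqrt s) ^ m *
        Zm (μ + ((d : ℝ) - 1) / 2) m (xi0 d x t y s u)) * (1 - u ^ 2) ^ (μ - 1)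

/-- Partial-sum kernel `K_n(W_{β,γ,μ})`. -/
def KnW (d : ℕ) (β γ μ : ℝ) (n : ℕ) (x : Euc d) (t : ℝ) (y : Euc d) (s : ℝ) : ℝ :=
  ∑ m ∈ Finset.range (n + 1), PnW d β γ μ m x t y s

/-- Cesàro `(C,δ)` kernel on the solid paraboloid. -/
def KnWCes (d : ℕ) (β γ μ δ : ℝ) (n : ℕ) (x : Euc d) (t : ℝ) (y : Euc d) (s : ℝ) : ℝ :=
  (binomC δ n)⁻¹ * ∑ m ∈ Finset.range (n + 1), binomC (δ - 1) (n - m) * KnW d β γ μ m x t y s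

/-- Cesàro `(C,δ)` means `S_n^δ(W_{β,γ,μ}; f, (x,t))`. -/
def SnWCes (d : ℕ) (β γ μ δ : ℝ) (n : ℕ) (f : Euc d × ℝ → ℝ) (x : Euc d) (t : ℝ) : ℝ :=
  bW d β γ μ * ∫ q in Vset d, f q * KnWCes d β γ μ δ n x t q.1 q.2 * WW d β γ μ q

/-- `ξ(x,t,y,s;z,u)` in the connection kernel on the solid paraboloid. -/
def ξW (d : ℕ) (x : Euc d) (t : ℝ) (y : Euc d) (s : ℝ) (z₁ z₂ u : ℝ) : ℝ :=
  (1 - z₁) / 2 * xi0 d x t y s u + (1 + z₁) / 2 * z₂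

/-- Normalization constant `κ_β`. -/
def κβ (d : ℕ) (β μ : ℝ) : ℝ :=
  (∫ z₁ in (-1:ℝ)..1, ∫ z₂ in (-1:ℝ)..1, ∫ u in (-1:ℝ)..1,
    (1 - z₁) ^ (μ + ((d : ℝ) - 1) / 2) * (1 + z₁) ^ (β - 1) * (1 - z₂ ^ 2) ^ (β - 1/2) *
      (1 - u ^ 2) ^ (μ - 1))⁻¹

/-- The operator `T_{β,γ,μ}` on the solid paraboloid. -/
def TW (d : ℕ) (β γ μ : ℝ) (g : ℝ × ℝ → ℝ × ℝ → ℝ) (x : Euc d) (t : ℝ) (y : Euc d) (s : ℝ) : ℝ :=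
  if β = 0 then
    σμ μ * ∫ u in (-1:ℝ)..1,
      g (Real.sqrt t, t) (Real.sqrt s * xi0 d x t y s u, s) * (1 - u ^ 2) ^ (μ - 1)
  else
    κβ d β μ * ∫ z₁ in (-1:ℝ)..1, ∫ z₂ in (-1:ℝ)..1, ∫ u in (-1:ℝ)..1,
      g (Real.sqrt t, t) (Real.sqrt s * ξW d x t y s z₁ z₂ u, s) *
        ((1 - z₁) ^ (μ + ((d : ℝ) - 1) / 2) * (1 + z₁) ^ (β - 1) * (1 - z₂ ^ 2) ^ (β - 1/2) *
          (1 - u ^ 2) ^ (μ - 1))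

/-- Directional derivative `⟨x,∇⟩f(x) = ∑ xᵢ ∂ᵢ f(x)`. -/
def xGrad (d : ℕ) (f : Euc d → ℝ) (x : Euc d) : ℝ := fderiv ℝ f x x

/-- Laplacian `Δf(x) = ∑ ∂ᵢ² f(x)`. -/
def lapl (d : ℕ) (f : Euc d → ℝ) (x : Euc d) : ℝ :=
  ∑ i : Fin d, fderiv ℝ (fun y => fderiv ℝ f y (EuclideanSpace.single i 1)) x
    (EuclideanSpace.single i 1)


/-- `Q_{m,n}(x,t) = P_{n-m}^{(m+α,γ)}(1-2t) t^{m/2} Y(x/√t)`. -/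
def QV0gen (d : ℕ) (α γ : ℝ) (m n : ℕ) (Y : Euc d → ℝ) (x : Euc d) (t : ℝ) : ℝ :=
  jacobiP (n - m) ((m : ℝ) + α) γ (1 - 2 * t) * (Real.sqrt t) ^ m * Y ((Real.sqrt t)⁻¹ • x)

end


noncomputable section AuxJ

open Finset

def jc (k : ℕ) (a b : ℝ) (j : ℕ) : ℝ :=
  poch (a + 1) k / (k.factorial : ℝ) *
    (poch (-(k : ℝ)) j * poch ((k : ℝ) + a + b + 1) j / (poch (a + 1) j * (j.factorial : ℝ)))

lemma poch_succ (a : ℝ) (n : ℕ) : poch a (n + 1) = poch a n * (a + n) :=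
  Finset.prod_range_succ _ _

lemma poch_pos {a : ℝ} (ha : 0 < a) (n : ℕ) : 0 < poch a n :=
  Finset.prod_pos fun i _ => by positivity

lemma jacobi_eq_sum (k : ℕ) (a b t : ℝ) :
    jacobiP k a b (1 - 2 * t) = ∑ j ∈ range (k + 1), jc k a b j * t ^ j := by
  unfold jacobiP jc
  rw [Finset.mul_sum]
  refine Finset.sum_congr rfl fun j _ => ?_
  have h : (1 - (1 - 2 * t)) / 2 = t := by ring
  rw [h]; ring

def jD1 (k : ℕ) (a b : ℝ) (t : ℝ) : ℝ :=
  ∑ j ∈ range (k + 1), jc k a b j * (j : ℝ) * t ^ (j - 1)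

def jD2 (k : ℕ) (a b : ℝ) (t : ℝ) : ℝ :=
  ∑ j ∈ range (k + 1), jc k a b j * ((j : ℝ) * ((j : ℝ) - 1)) * t ^ (j - 2)

lemma hasDerivAt_jacobi (k : ℕ) (a b t : ℝ) :
    HasDerivAt (fun s => jacobiP k a b (1 - 2 * s)) (jD1 k a b t) t := by
  have h : HasDerivAt (fun s : ℝ => ∑ j ∈ range (k + 1), jc k a b j * s ^ j)
      (∑ j ∈ range (k + 1), jc k a b j * ((j : ℝ) * t ^ (j - 1))) t := by
    apply HasDerivAt.fun_sum
    intro j _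
    exact HasDerivAt.const_mul _ (hasDerivAt_pow j t)
  have h2 : ∑ j ∈ range (k + 1), jc k a b j * ((j : ℝ) * t ^ (j - 1)) = jD1 k a b t := by
    unfold jD1; exact Finset.sum_congr rfl fun j _ => by ring
  exact (h2 ▸ h).congr_of_eventuallyEq (Filter.Eventually.of_forall fun s => jacobi_eq_sum k a b s)

lemma hasDerivAt_jD1 (k : ℕ) (a b t : ℝ) :
    HasDerivAt (jD1 k a b) (jD2 k a b t) t := by
  have h : HasDerivAt (fun s : ℝ => ∑ j ∈ range (k + 1), jc k a b j * (j : ℝ) * s ^ (j - 1))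
      (∑ j ∈ range (k + 1), jc k a b j * (j : ℝ) * ((j - 1 : ℕ) * t ^ (j - 1 - 1))) t := by
    apply HasDerivAt.fun_sum
    intro j _
    exact HasDerivAt.const_mul _ (hasDerivAt_pow (j - 1) t)
  have h2 : ∑ j ∈ range (k + 1), jc k a b j * (j : ℝ) * ((j - 1 : ℕ) * t ^ (j - 1 - 1))
      = jD2 k a b t := by
    unfold jD2
    refine Finset.sum_congr rfl fun j _ => ?_
    rcases j with _ | j
    · simp
    · have : (j + 1 : ℕ) - 1 - 1 = (j + 1) - 2 := rfl
      rw [this]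
      push_cast [Nat.add_sub_cancel]
      ring
  exact h2 ▸ h

lemma jc_rec (k : ℕ) (a b : ℝ) (ha : -1 < a) (j : ℕ) :
    jc k a b (j + 1) * (((j : ℝ) + 1) * ((j : ℝ) + 1 + a)) +
      jc k a b j * (((k : ℝ) - (j : ℝ)) * ((k : ℝ) + (j : ℝ) + a + b + 1)) = 0 := by
  have hpa : poch (a + 1) j ≠ 0 := (poch_pos (by linarith) j).ne'
  have haj : a + 1 + (j : ℝ) ≠ 0 := by
    have hj := (Nat.cast_nonneg j : (0:ℝ) ≤ (j:ℝ)); intro h; linarith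
  have hfj : (j.factorial : ℝ) ≠ 0 := Nat.cast_ne_zero.mpr j.factorial_ne_zero
  have hkf : (k.factorial : ℝ) ≠ 0 := Nat.cast_ne_zero.mpr k.factorial_ne_zero
  have hj1 : (j : ℝ) + 1 ≠ 0 := by positivity
  unfold jc
  rw [poch_succ, poch_succ, poch_succ, Nat.factorial_succ]
  push_cast
  field_simp
  ring

lemma jacobi_ode (k : ℕ) (a b : ℝ) (ha : -1 < a) (t : ℝ) :
    t * (1 - t) * jD2 k a b t + ((a + 1) - (a + b + 2) * t) * jD1 k a b t +
      ((k : ℝ) * ((k : ℝ) + a + b + 1)) * jacobiP k a b (1 - 2 * t) = 0 := by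
  rw [jacobi_eq_sum]
  unfold jD1 jD2
  rw [Finset.mul_sum, Finset.mul_sum, Finset.mul_sum, ← Finset.sum_add_distrib,
    ← Finset.sum_add_distrib]
  have key : ∀ j ∈ range (k + 1),
      t * (1 - t) * (jc k a b j * ((j : ℝ) * ((j : ℝ) - 1)) * t ^ (j - 2)) +
        ((a + 1) - (a + b + 2) * t) * (jc k a b j * (j : ℝ) * t ^ (j - 1)) +
        ((k : ℝ) * ((k : ℝ) + a + b + 1)) * (jc k a b j * t ^ j)
      = jc k a b j * ((j : ℝ) * ((j : ℝ) + a)) * t ^ (j - 1) +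
        jc k a b j * (((k : ℝ) - (j : ℝ)) * ((k : ℝ) + (j : ℝ) + a + b + 1)) * t ^ j := by
    intro j _
    match j with
    | 0 => push_cast; ring
    | 1 => push_cast; ring
    | (j + 2) =>
      have e1 : (j + 2) - 2 = j := rfl
      have e2 : (j + 2) - 1 = j + 1 := rfl
      rw [e1, e2]
      push_cast
      ring
  rw [Finset.sum_congr rfl key, Finset.sum_add_distrib]
  have h1 : ∑ j ∈ range (k + 1), jc k a b j * ((j : ℝ) * ((j : ℝ) + a)) * t ^ (j - 1)
      = ∑ j ∈ range k, jc k a b (j + 1) * (((j : ℝ) + 1) * ((j : ℝ) + 1 + a)) * t ^ j := by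
    rw [Finset.sum_range_succ']
    simp only [Nat.cast_zero, Nat.cast_add, Nat.cast_one, Nat.add_sub_cancel]
    norm_num
  have h2 : ∑ j ∈ range (k + 1),
        jc k a b j * (((k : ℝ) - (j : ℝ)) * ((k : ℝ) + (j : ℝ) + a + b + 1)) * t ^ j
      = ∑ j ∈ range k,
        jc k a b j * (((k : ℝ) - (j : ℝ)) * ((k : ℝ) + (j : ℝ) + a + b + 1)) * t ^ j := by
    rw [Finset.sum_range_succ]
    norm_num
  rw [h1, h2, ← Finset.sum_add_distrib]
  apply Finset.sum_eq_zero
  intro j _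
  have := jc_rec k a b ha j
  calc jc k a b (j + 1) * (((j : ℝ) + 1) * ((j : ℝ) + 1 + a)) * t ^ j +
        jc k a b j * (((k : ℝ) - (j : ℝ)) * ((k : ℝ) + (j : ℝ) + a + b + 1)) * t ^ j
      = (jc k a b (j + 1) * (((j : ℝ) + 1) * ((j : ℝ) + 1 + a)) +
          jc k a b j * (((k : ℝ) - (j : ℝ)) * ((k : ℝ) + (j : ℝ) + a + b + 1))) * t ^ j := by ring
    _ = 0 := by rw [this]; ring


variable {d : ℕ}


lemma contDiff_evalP (P : MvPolynomial (Fin d) ℝ) :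
    ContDiff ℝ (⊤ : ℕ∞) (fun w : Euc d => MvPolynomial.eval (fun i => w i) P) := by
  induction P using MvPolynomial.induction_on with
  | C c => simp only [MvPolynomial.eval_C]; exact contDiff_const
  | add p q hp hq => simp only [MvPolynomial.eval_add]; exact hp.add hq
  | mul_X p i hp =>
    simp only [MvPolynomial.eval_mul, MvPolynomial.eval_X]
    exact hp.mul ((EuclideanSpace.proj i : Euc d →L[ℝ] ℝ).contDiff)

lemma fderiv_smul_comp (H : Euc d → ℝ) (hH : Differentiable ℝ H) (c : ℝ) (x w : Euc d) :
    fderiv ℝ (fun y => H (c • y)) x w = fderiv ℝ H (c • x) (c • w) := by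
  have h1 : HasFDerivAt (fun y : Euc d => c • y)
      (c • ContinuousLinearMap.id ℝ (Euc d)) x := (hasFDerivAt_id x).const_smul c
  have h2 := ((hH (c • x)).hasFDerivAt.comp x h1).fderiv
  have h3 : (fun y : Euc d => H (c • y)) = H ∘ fun y : Euc d => c • y := rfl
  rw [h3, h2]
  simp

lemma diff_smul_comp (H : Euc d → ℝ) (hH : Differentiable ℝ H) (c : ℝ) :
    Differentiable ℝ (fun y : Euc d => H (c • y)) :=
  hH.comp (differentiable_id.const_smul c)

lemma xgrad_const_mul_smul (H : Euc d → ℝ) (hH : Differentiable ℝ H) (K c : ℝ) (x : Euc d) :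
    fderiv ℝ (fun w => K * H (c • w)) x x = K * fderiv ℝ H (c • x) (c • x) := by
  rw [fderiv_const_mul ((diff_smul_comp H hH c) x) K]
  simp only [ContinuousLinearMap.coe_smul', Pi.smul_apply, smul_eq_mul]
  rw [fderiv_smul_comp H hH c x x]

lemma diff_fderiv_apply (H : Euc d → ℝ) (hH : ContDiff ℝ (⊤ : ℕ∞) H) (e : Euc d) :
    Differentiable ℝ (fun z : Euc d => fderiv ℝ H z e) :=
  ((hH.fderiv_right (m := (⊤ : ℕ∞)) (mod_cast le_top)).differentiable (by simp)).clm_apply (differentiable_const e)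

lemma lapl_const_mul_smul (H : Euc d → ℝ) (hH : ContDiff ℝ (⊤ : ℕ∞) H) (K c : ℝ) (x : Euc d) :
    lapl d (fun w => K * H (c • w)) x = K * c ^ 2 * lapl d H (c • x) := by
  have hHd : Differentiable ℝ H := hH.differentiable (by simp)
  unfold lapl
  rw [Finset.mul_sum]
  refine Finset.sum_congr rfl fun i _ => ?_
  set e := EuclideanSpace.single (𝕜 := ℝ) i (1 : ℝ) with he
  have h1 : (fun y : Euc d => fderiv ℝ (fun w => K * H (c • w)) y e)
      = fun y => (K * c) * fderiv ℝ H (c • y) e := by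
    funext y
    rw [fderiv_const_mul ((diff_smul_comp H hHd c) y) K]
    simp only [ContinuousLinearMap.coe_smul', Pi.smul_apply, smul_eq_mul]
    rw [fderiv_smul_comp H hHd c y e]
    rw [(fderiv ℝ H (c • y)).map_smul]
    simp [mul_assoc]
  rw [h1]
  have hΦ : Differentiable ℝ (fun z : Euc d => fderiv ℝ H z e) := diff_fderiv_apply H hH e
  rw [fderiv_const_mul ((diff_smul_comp _ hΦ c) x) (K * c)]
  simp only [ContinuousLinearMap.coe_smul', Pi.smul_apply, smul_eq_mul]
  rw [fderiv_smul_comp _ hΦ c x e, (fderiv ℝ _ (c • x)).map_smul]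
  simp only [smul_eq_mul]
  ring

lemma key_hasDerivAt (H : Euc d → ℝ) (hH : Differentiable ℝ H) (x : Euc d) {t : ℝ}
    (ht : 0 < t) :
    HasDerivAt (fun s : ℝ => H ((Real.sqrt s)⁻¹ • x))
      (-(1 / (2 * t)) * fderiv ℝ H ((Real.sqrt t)⁻¹ • x) ((Real.sqrt t)⁻¹ • x)) t := by
  have hst : Real.sqrt t ≠ 0 := (Real.sqrt_pos.mpr ht).ne'
  have hc : HasDerivAt (fun s : ℝ => (Real.sqrt s)⁻¹)
      (-(1 / (2 * Real.sqrt t)) / (Real.sqrt t) ^ 2) t := by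
    exact (Real.hasDerivAt_sqrt ht.ne').inv hst
  have hsm : HasDerivAt (fun s : ℝ => (Real.sqrt s)⁻¹ • x)
      ((-(1 / (2 * Real.sqrt t)) / (Real.sqrt t) ^ 2) • x) t := hc.smul_const x
  have hcomp := (hH ((Real.sqrt t)⁻¹ • x)).hasFDerivAt.comp_hasDerivAt t hsm
  refine hcomp.congr_deriv ?_; symm
  rw [(fderiv ℝ H _).map_smul, (fderiv ℝ H _).map_smul]
  simp only [smul_eq_mul]
  rw [Real.sq_sqrt ht.le]
  field_simp


def Fp (d : ℕ) (P : MvPolynomial (Fin d) ℝ) : Euc d → ℝ :=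
  fun w => MvPolynomial.eval (fun i => w i) P

def Gp (d : ℕ) (P : MvPolynomial (Fin d) ℝ) : Euc d → ℝ :=
  fun w => fderiv ℝ (Fp d P) w w

def G2p (d : ℕ) (P : MvPolynomial (Fin d) ℝ) : Euc d → ℝ :=
  fun w => fderiv ℝ (Gp d P) w w

lemma FpCont (d : ℕ) (P : MvPolynomial (Fin d) ℝ) : ContDiff ℝ (⊤ : ℕ∞) (Fp d P) :=
  contDiff_evalP P

lemma FpDiff (d : ℕ) (P : MvPolynomial (Fin d) ℝ) : Differentiable ℝ (Fp d P) :=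
  (FpCont d P).differentiable (by simp)

lemma GpCont (d : ℕ) (P : MvPolynomial (Fin d) ℝ) : ContDiff ℝ (⊤ : ℕ∞) (Gp d P) :=
  ((FpCont d P).fderiv_right (mod_cast le_top)).clm_apply contDiff_id

lemma GpDiff (d : ℕ) (P : MvPolynomial (Fin d) ℝ) : Differentiable ℝ (Gp d P) :=
  (GpCont d P).differentiable (by simp)

lemma keyF (d : ℕ) (P : MvPolynomial (Fin d) ℝ) (x : Euc d) {t : ℝ} (ht : 0 < t) :
    HasDerivAt (fun s : ℝ => Fp d P ((Real.sqrt s)⁻¹ • x))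
      (-(1 / (2 * t)) * Gp d P ((Real.sqrt t)⁻¹ • x)) t :=
  key_hasDerivAt (Fp d P) (FpDiff d P) x ht

lemma keyG (d : ℕ) (P : MvPolynomial (Fin d) ℝ) (x : Euc d) {t : ℝ} (ht : 0 < t) :
    HasDerivAt (fun s : ℝ => Gp d P ((Real.sqrt s)⁻¹ • x))
      (-(1 / (2 * t)) * G2p d P ((Real.sqrt t)⁻¹ • x)) t :=
  key_hasDerivAt (Gp d P) (GpDiff d P) x ht

lemma xgrad_sum (H1 H2 : Euc d → ℝ) (h1 : Differentiable ℝ H1) (h2 : Differentiable ℝ H2)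
    (K1 K2 c : ℝ) (x : Euc d) :
    fderiv ℝ (fun w => K1 * H1 (c • w) + K2 * H2 (c • w)) x x
      = K1 * fderiv ℝ H1 (c • x) (c • x) + K2 * fderiv ℝ H2 (c • x) (c • x) := by
  have d1 : DifferentiableAt ℝ (fun w : Euc d => K1 * H1 (c • w)) x :=
    (((diff_smul_comp H1 h1 c) x).const_mul K1)
  have d2 : DifferentiableAt ℝ (fun w : Euc d => K2 * H2 (c • w)) x :=
    (((diff_smul_comp H2 h2 c) x).const_mul K2)
  rw [fderiv_fun_add d1 d2]
  rw [ContinuousLinearMap.add_apply]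
  rw [xgrad_const_mul_smul H1 h1 K1 c x, xgrad_const_mul_smul H2 h2 K2 c x]

lemma hasDerivAt_u_aux (d : ℕ) (P : MvPolynomial (Fin d) ℝ) (k : ℕ) (a b q : ℝ)
    (y : Euc d) {s : ℝ} (hs : 0 < s) :
    HasDerivAt (fun s' : ℝ => jacobiP k a b (1 - 2 * s') * s' ^ q *
        Fp d P ((Real.sqrt s')⁻¹ • y))
      (jD1 k a b s * s ^ q * Fp d P ((Real.sqrt s)⁻¹ • y)
        + q * jacobiP k a b (1 - 2 * s) * s ^ (q - 1) * Fp d P ((Real.sqrt s)⁻¹ • y)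
        - 1/2 * jacobiP k a b (1 - 2 * s) * s ^ (q - 1) * Gp d P ((Real.sqrt s)⁻¹ • y)) s := by
  have h := ((hasDerivAt_jacobi k a b s).mul
      (Real.hasDerivAt_rpow_const (p := q) (Or.inl hs.ne'))).mul (keyF d P y hs)
  refine h.congr_deriv ?_; symm
  simp only [Pi.mul_apply]
  rw [Real.rpow_sub_one hs.ne']
  field_simp
  ring

lemma hasDerivAt_W (d : ℕ) (P : MvPolynomial (Fin d) ℝ) (k : ℕ) (a b q : ℝ)
    (x : Euc d) {t : ℝ} (ht : 0 < t) :
    HasDerivAt (fun s : ℝ =>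
        jD1 k a b s * s ^ q * Fp d P ((Real.sqrt s)⁻¹ • x)
        + q * jacobiP k a b (1 - 2 * s) * s ^ (q - 1) * Fp d P ((Real.sqrt s)⁻¹ • x)
        - 1/2 * jacobiP k a b (1 - 2 * s) * s ^ (q - 1) * Gp d P ((Real.sqrt s)⁻¹ • x))
      (jD2 k a b t * t ^ q * Fp d P ((Real.sqrt t)⁻¹ • x)
        + 2 * q * jD1 k a b t * t ^ (q - 1) * Fp d P ((Real.sqrt t)⁻¹ • x)
        - jD1 k a b t * t ^ (q - 1) * Gp d P ((Real.sqrt t)⁻¹ • x)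
        + q * (q - 1) * jacobiP k a b (1 - 2 * t) * t ^ (q - 2) * Fp d P ((Real.sqrt t)⁻¹ • x)
        - q / 2 * jacobiP k a b (1 - 2 * t) * t ^ (q - 2) * Gp d P ((Real.sqrt t)⁻¹ • x)
        - 1/2 * (q - 1) * jacobiP k a b (1 - 2 * t) * t ^ (q - 2) * Gp d P ((Real.sqrt t)⁻¹ • x)
        + 1/4 * jacobiP k a b (1 - 2 * t) * t ^ (q - 2) * G2p d P ((Real.sqrt t)⁻¹ • x)) t := by
  have h1 := ((hasDerivAt_jD1 k a b t).mul
      (Real.hasDerivAt_rpow_const (p := q) (Or.inl ht.ne'))).mul (keyF d P x ht)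
  have h2 := (((hasDerivAt_jacobi k a b t).const_mul q).mul
      (Real.hasDerivAt_rpow_const (p := q - 1) (Or.inl ht.ne'))).mul (keyF d P x ht)
  have h3 := (((hasDerivAt_jacobi k a b t).const_mul (1/2 : ℝ)).mul
      (Real.hasDerivAt_rpow_const (p := q - 1) (Or.inl ht.ne'))).mul (keyG d P x ht)
  have h := (h1.add h2).sub h3
  refine h.congr_deriv ?_; symm
  simp only [Pi.mul_apply]
  have e3 : t ^ (q - 1 - 1) = t ^ (q - 2) := by rw [show q - 1 - 1 = q - 2 by ring]
  have e1 : t ^ (q - 1) = t ^ (q - 2) * t := by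
    rw [show q - 1 = q - 2 + 1 by ring, Real.rpow_add ht, Real.rpow_one]
  have e2 : t ^ q = t ^ (q - 2) * t ^ (2 : ℕ) := by
    rw [show q = q - 2 + 2 by ring, Real.rpow_add ht, Real.rpow_two]; ring
  rw [e3, e1, e2]
  field_simp
  ring

end AuxJ

/-- the differential equation satisfied by `Q_{m,k}^n` on the solid
paraboloid in the case `β = 0`. -/
theorem stmt15 (d : ℕ) (hd : 2 ≤ d) (γ μ : ℝ) (hγ : -1 < γ) (hμ : -(1/2) < μ)
    (m n : ℕ) (hmn : m ≤ n) (P : MvPolynomial (Fin d) ℝ)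
    (hP : ∀ v : Euc d,
      lapl d (fun w => MvPolynomial.eval (fun i => w i) P) v -
          xGrad d (xGrad d fun w => MvPolynomial.eval (fun i => w i) P) v -
          (2 * μ + (d : ℝ) - 1) * xGrad d (fun w => MvPolynomial.eval (fun i => w i) P) v =
        -((m : ℝ) * ((m : ℝ) + 2 * μ + (d : ℝ) - 1)) * MvPolynomial.eval (fun i => v i) P)
    (u : Euc d → ℝ → ℝ)
    (hu : ∀ (x : Euc d) (t : ℝ),
      u x t = jacobiP (n - m) ((m : ℝ) + μ + ((d : ℝ) - 1)/2) γ (1 - 2 * t) *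
        t ^ ((m : ℝ)/2) *
        MvPolynomial.eval (fun i => (((Real.sqrt t)⁻¹ • x : Euc d)) i) P) :
    ∀ (x : Euc d), ∀ t ∈ Set.Ioo (0:ℝ) 1,
      t * (1 - t) * deriv (deriv (u x)) t +
          (1 - t) * fderiv ℝ (fun x' => deriv (u x') t) x x +
          1/4 * (1 - t) * lapl d (fun x' => u x' t) x +
          (μ + ((d : ℝ) + 1)/2) * (1 - t) * deriv (u x) t -
          (γ + 1)/2 * (2 * t * deriv (u x) t + fderiv ℝ (fun x' => u x' t) x x) =
        -((n : ℝ) * ((n : ℝ) + μ + γ + ((d : ℝ) + 1)/2) -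
            (m : ℝ) * ((n : ℝ) + μ + (γ + (d : ℝ))/2)) * u x t := by
  intro x t ht
  obtain ⟨ht0, ht1⟩ := ht
  set q : ℝ := (m : ℝ) / 2 with hqdef
  set a : ℝ := (m : ℝ) + μ + ((d : ℝ) - 1) / 2 with hadef
  set k : ℕ := n - m with hkdef
  have hu' : ∀ (y : Euc d) (s : ℝ),
      u y s = jacobiP k a γ (1 - 2 * s) * s ^ q * Fp d P ((Real.sqrt s)⁻¹ • y) := hu
  have hux : u x = fun s => jacobiP k a γ (1 - 2 * s) * s ^ q * Fp d P ((Real.sqrt s)⁻¹ • x) :=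
    funext fun s => hu' x s
  -- first derivative
  have hWx : ∀ {s : ℝ}, 0 < s → HasDerivAt (u x)
      (jD1 k a γ s * s ^ q * Fp d P ((Real.sqrt s)⁻¹ • x)
        + q * jacobiP k a γ (1 - 2 * s) * s ^ (q - 1) * Fp d P ((Real.sqrt s)⁻¹ • x)
        - 1/2 * jacobiP k a γ (1 - 2 * s) * s ^ (q - 1) * Gp d P ((Real.sqrt s)⁻¹ • x)) s := by
    intro s hs
    rw [hux]
    exact hasDerivAt_u_aux d P k a γ q x hs
  have h1d : deriv (u x) t = jD1 k a γ t * t ^ q * Fp d P ((Real.sqrt t)⁻¹ • x)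
        + q * jacobiP k a γ (1 - 2 * t) * t ^ (q - 1) * Fp d P ((Real.sqrt t)⁻¹ • x)
        - 1/2 * jacobiP k a γ (1 - 2 * t) * t ^ (q - 1) * Gp d P ((Real.sqrt t)⁻¹ • x) :=
    (hWx ht0).deriv
  -- second derivative
  have h2d : deriv (deriv (u x)) t
      = jD2 k a γ t * t ^ q * Fp d P ((Real.sqrt t)⁻¹ • x)
        + 2 * q * jD1 k a γ t * t ^ (q - 1) * Fp d P ((Real.sqrt t)⁻¹ • x)
        - jD1 k a γ t * t ^ (q - 1) * Gp d P ((Real.sqrt t)⁻¹ • x)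
        + q * (q - 1) * jacobiP k a γ (1 - 2 * t) * t ^ (q - 2) * Fp d P ((Real.sqrt t)⁻¹ • x)
        - q / 2 * jacobiP k a γ (1 - 2 * t) * t ^ (q - 2) * Gp d P ((Real.sqrt t)⁻¹ • x)
        - 1/2 * (q - 1) * jacobiP k a γ (1 - 2 * t) * t ^ (q - 2) * Gp d P ((Real.sqrt t)⁻¹ • x)
        + 1/4 * jacobiP k a γ (1 - 2 * t) * t ^ (q - 2) * G2p d P ((Real.sqrt t)⁻¹ • x) := by
    have heq : deriv (u x) =ᶠ[nhds t] fun s =>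
        jD1 k a γ s * s ^ q * Fp d P ((Real.sqrt s)⁻¹ • x)
        + q * jacobiP k a γ (1 - 2 * s) * s ^ (q - 1) * Fp d P ((Real.sqrt s)⁻¹ • x)
        - 1/2 * jacobiP k a γ (1 - 2 * s) * s ^ (q - 1) * Gp d P ((Real.sqrt s)⁻¹ • x) := by
      filter_upwards [isOpen_Ioi.eventually_mem (show t ∈ Set.Ioi (0:ℝ) from ht0)] with s hs
      exact (hWx hs).deriv
    rw [heq.deriv_eq]
    exact (hasDerivAt_W d P k a γ q x ht0).deriv
  -- spatial derivatives
  have hsp1 : (fun x' : Euc d => u x' t)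
      = fun x' => jacobiP k a γ (1 - 2 * t) * t ^ q * Fp d P ((Real.sqrt t)⁻¹ • x') :=
    funext fun x' => hu' x' t
  have hxg : fderiv ℝ (fun x' => u x' t) x x
      = jacobiP k a γ (1 - 2 * t) * t ^ q * Gp d P ((Real.sqrt t)⁻¹ • x) := by
    rw [hsp1]
    exact xgrad_const_mul_smul (Fp d P) (FpDiff d P)
      (jacobiP k a γ (1 - 2 * t) * t ^ q) ((Real.sqrt t)⁻¹) x
  have hlap : lapl d (fun x' => u x' t) x
      = jacobiP k a γ (1 - 2 * t) * t ^ q * t⁻¹ * lapl d (Fp d P) ((Real.sqrt t)⁻¹ • x) := by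
    rw [hsp1]
    have := lapl_const_mul_smul (Fp d P) (FpCont d P)
      (jacobiP k a γ (1 - 2 * t) * t ^ q) ((Real.sqrt t)⁻¹) x
    rw [this, inv_pow, Real.sq_sqrt ht0.le]
  -- mixed derivative
  have hmix0 : (fun x' : Euc d => deriv (u x') t)
      = fun x' => (jD1 k a γ t * t ^ q + q * jacobiP k a γ (1 - 2 * t) * t ^ (q - 1))
            * Fp d P ((Real.sqrt t)⁻¹ • x')
          + (-(1/2) * jacobiP k a γ (1 - 2 * t) * t ^ (q - 1)) * Gp d P ((Real.sqrt t)⁻¹ • x') := by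
    funext y
    have huy : u y = fun s => jacobiP k a γ (1 - 2 * s) * s ^ q *
        Fp d P ((Real.sqrt s)⁻¹ • y) := funext fun s => hu' y s
    rw [huy, (hasDerivAt_u_aux d P k a γ q y ht0).deriv]
    ring
  have hmix : fderiv ℝ (fun x' => deriv (u x') t) x x
      = (jD1 k a γ t * t ^ q + q * jacobiP k a γ (1 - 2 * t) * t ^ (q - 1))
            * Gp d P ((Real.sqrt t)⁻¹ • x)
        + (-(1/2) * jacobiP k a γ (1 - 2 * t) * t ^ (q - 1)) * G2p d P ((Real.sqrt t)⁻¹ • x) := by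
    rw [hmix0]
    exact xgrad_sum (Fp d P) (Gp d P) (FpDiff d P) (GpDiff d P) _ _ _ x
  -- the two functional equations
  have hd2 : (2 : ℝ) ≤ (d : ℝ) := by exact_mod_cast hd
  have hm0 : (0 : ℝ) ≤ (m : ℝ) := Nat.cast_nonneg m
  have ha1 : (-1 : ℝ) < a := by rw [hadef]; linarith
  have hODE := jacobi_ode k a γ ha1 t
  have hcast : (k : ℝ) = (n : ℝ) - (m : ℝ) := by
    rw [hkdef]; exact Nat.cast_sub hmn
  rw [hcast] at hODE
  have hPv := hP ((Real.sqrt t)⁻¹ • x)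
  have hPv' : lapl d (Fp d P) ((Real.sqrt t)⁻¹ • x) - G2p d P ((Real.sqrt t)⁻¹ • x)
      - (2 * μ + (d : ℝ) - 1) * Gp d P ((Real.sqrt t)⁻¹ • x)
      = -((m : ℝ) * ((m : ℝ) + 2 * μ + (d : ℝ) - 1)) * Fp d P ((Real.sqrt t)⁻¹ • x) := hPv
  -- assemble
  rw [h2d, hmix, hlap, h1d, hxg, hu' x t]
  have e1 : t ^ (q - 1) = t ^ (q - 2) * t := by
    rw [show q - 1 = q - 2 + 1 by ring, Real.rpow_add ht0, Real.rpow_one]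
  have e2 : t ^ q = t ^ (q - 2) * t ^ (2 : ℕ) := by
    rw [show q = q - 2 + 2 by ring, Real.rpow_add ht0, Real.rpow_two]; ring
  rw [e1, e2]
  rw [hqdef, hadef] at *
  generalize Fp d P ((Real.sqrt t)⁻¹ • x) = A at *
  generalize Gp d P ((Real.sqrt t)⁻¹ • x) = B at *
  generalize G2p d P ((Real.sqrt t)⁻¹ • x) = C at *
  generalize lapl d (Fp d P) ((Real.sqrt t)⁻¹ • x) = L at *
  generalize jacobiP k ((m : ℝ) + μ + ((d : ℝ) - 1) / 2) γ (1 - 2 * t) = J at *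
  generalize jD1 k ((m : ℝ) + μ + ((d : ℝ) - 1) / 2) γ t = J1 at *
  generalize jD2 k ((m : ℝ) + μ + ((d : ℝ) - 1) / 2) γ t = J2 at *
  generalize t ^ ((m : ℝ) / 2 - 2) = pw at *
  have e5 : J * (pw * t ^ 2) * t⁻¹ * L = J * (pw * t) * L := by
    field_simp
  rw [e5]
  linear_combination (pw * t ^ 2 * A) * hODE + (1 - t) * pw * t / 4 * J * hPv'
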